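/- arXiv:2209.03130 — 5 statements merged into one kernel-verified Lean document; each statement's English description precedes it below -/
import Mathlib

section
/- If a family 𝒰 of open subsets of the Cantor space 𝒫(ℕ) (identified with 2^ℕ) is an ω-cover of the set Fin of finite subsets of ℕ (i.e., every finite subset of Fin is contained in some member of 𝒰, and no member equals the whole space), then there exist a strictly increasing function a : ℕ → ℕ and sets U₁, U₂, … ∈ 𝒰 such that for every infinite set x ⊆ ℕ and every natural number n: if x ∩ [a(n), a(n+1)) = ∅, then x ∈ Uₙ. -/
open Set Filter

abbrev CSp : Type := ℕ → Bool

def toSet (x : CSp) : Set ℕ := {n | x n = true}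

def IsInfSet (x : CSp) : Prop := (toSet x).Infinite

def IsFinSet (x : CSp) : Prop := (toSet x).Finite

def FinPts : Set CSp := {x | IsFinSet x}

def InfPts : Set CSp := {x | IsInfSet x}

/-- The Michael line topology on `𝒫(ℕ) ≅ 2^ℕ`: Cantor-open sets together with
singletons of infinite sets generate the topology. -/
def michael : TopologicalSpace CSp :=
  TopologicalSpace.generateFrom
    ({U | IsOpen U} ∪ {s | ∃ x, IsInfSet x ∧ s = {x}})

/-- `U` is an ω-cover of `S` w.r.t. topology `t`: a family of proper open sets such
that every finite subset of `S` is contained in a member. -/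
def IsOmegaCoverT {X : Type*} (t : TopologicalSpace X) (S : Set X)
    (U : Set (Set X)) : Prop :=
  (∀ u ∈ U, t.IsOpen u ∧ u ≠ Set.univ) ∧
    ∀ F : Set X, F.Finite → F ⊆ S → ∃ u ∈ U, F ⊆ u

/-- `U` is a γ-cover of `S` w.r.t. topology `t`: an infinite family of proper open
sets such that every point of `S` lies in all but finitely many members. -/
def IsGammaCoverT {X : Type*} (t : TopologicalSpace X) (S : Set X)
    (U : Set (Set X)) : Prop :=
  U.Infinite ∧ (∀ u ∈ U, t.IsOpen u ∧ u ≠ Set.univ) ∧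
    ∀ x ∈ S, {u ∈ U | x ∉ u}.Finite

/-- The property `(Ω_ctbl → Γ)`: every countable ω-cover contains a γ-subcover. -/
def CtblOG {X : Type*} (t : TopologicalSpace X) (S : Set X) : Prop :=
  ∀ U : Set (Set X), U.Countable → IsOmegaCoverT t S U →
    ∃ V ⊆ U, IsGammaCoverT t S V

/-- The Gerlits–Nagy property `(Ω → Γ)`: every ω-cover contains a γ-subcover. -/
def GNGamma {X : Type*} (t : TopologicalSpace X) (S : Set X) : Prop :=
  ∀ U : Set (Set X), IsOmegaCoverT t S U → ∃ V ⊆ U, IsGammaCoverT t S V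

/-- The pseudointersection number 𝔭. -/
noncomputable def pNumber : Cardinal :=
  sInf { c | ∃ F : Set (Set ℕ), Cardinal.mk ↥F = c ∧ (∀ a ∈ F, a.Infinite) ∧
    (∀ G : Finset (Set ℕ), ↑G ⊆ F → (⋂ a ∈ G, a).Infinite) ∧
    ¬ ∃ p : Set ℕ, p.Infinite ∧ ∀ a ∈ F, (p \ a).Finite }

/-- `X` is a κ-generalized tower. -/
def IsGenTower (κ : Cardinal) (X : Set CSp) : Prop :=
  X ⊆ InfPts ∧ κ ≤ Cardinal.mk ↥X ∧
    ∀ a : ℕ → ℕ, StrictMono a → ∃ b : Set ℕ, b.Infinite ∧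
      ∃ S : Set CSp, S ⊆ X ∧ Cardinal.mk ↥S < κ ∧
        ∀ x ∈ X \ S, (toSet x ∩ ⋃ n ∈ b, Set.Ico (a n) (a (n + 1))).Finite


lemma open_cyl {u : Set CSp} (hu : IsOpen u) {p : CSp} (hp : p ∈ u) :
    ∃ m, ∀ q : CSp, (∀ i < m, q i = p i) → q ∈ u := by
  obtain ⟨I, w, hw, hsub⟩ := isOpen_pi_iff.mp hu p hp
  refine ⟨(I.sup id) + 1, fun q hq => hsub fun i hi => ?_⟩
  have hi' : i ∈ I := hi
  have : q i = p i := hq i (Nat.lt_succ_of_le (Finset.le_sup (f := id) hi'))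
  rw [this]; exact (hw i hi').2

lemma step0 (U : Set (Set CSp)) (hU : IsOmegaCoverT inferInstance FinPts U) (k : ℕ) :
    ∃ m : ℕ, ∃ u ∈ U, k < m ∧
      ∀ x : CSp, (∀ i, k ≤ i → i < m → x i = false) → x ∈ u := by
  set F : Set CSp := {x | ∀ i, k ≤ i → x i = false} with hFdef
  have hFfin : F.Finite := by
    have himg : ((fun x : CSp => (fun j : Fin k => x j)) '' F).Finite := Set.toFinite _
    apply Set.Finite.of_finite_image himg
    intro x hx y hy hxy
    funext i
    by_cases h : i < k
    · exact congrFun hxy ⟨i, h⟩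
    · rw [hx i (le_of_not_gt h), hy i (le_of_not_gt h)]
  have hFsub : F ⊆ FinPts := by
    intro x hx
    refine (Set.finite_Iio k).subset (fun i hi => ?_)
    by_contra h
    have := hx i (le_of_not_gt h)
    rw [hi] at this
    exact Bool.true_eq_false.mp this
  obtain ⟨u, huU, hFu⟩ := hU.2 F hFfin hFsub
  have hop : IsOpen u := (hU.1 u huU).1
  have hch : ∀ x ∈ F, ∃ m, ∀ q : CSp, (∀ i < m, q i = x i) → q ∈ u :=
    fun x hx => open_cyl hop (hFu hx)
  choose! f hf using hch
  refine ⟨max (k+1) (hFfin.toFinset.sup f), u, huU,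
    lt_of_lt_of_le (Nat.lt_succ_self k) (le_max_left _ _), ?_⟩
  intro x hx
  set x' : CSp := fun i => if i < k then x i else false with hx'def
  have hx'F : x' ∈ F := fun i hi => by simp [hx'def, Nat.not_lt.mpr hi]
  apply hf x' hx'F
  intro i hi
  have hif : f x' ≤ max (k+1) (hFfin.toFinset.sup f) :=
    le_trans (Finset.le_sup (hFfin.mem_toFinset.mpr hx'F)) (le_max_right _ _)
  by_cases h : i < k
  · simp [hx'def, h]
  · simp only [hx'def, if_neg h]
    exact hx i (le_of_not_gt h) (lt_of_lt_of_le hi hif)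

theorem stmt0 (U : Set (Set CSp))
    (hU : IsOmegaCoverT inferInstance FinPts U) :
    ∃ a : ℕ → ℕ, StrictMono a ∧ ∃ V : ℕ → Set CSp, (∀ n, V n ∈ U) ∧
      ∀ x : CSp, IsInfSet x → ∀ n : ℕ,
        toSet x ∩ Set.Ico (a n) (a (n + 1)) = ∅ → x ∈ V n := by
  choose m u hu hlt hprop using step0 U hU
  let a : ℕ → ℕ := fun n => Nat.rec 0 (fun _ k => m k) n
  refine ⟨a, strictMono_nat_of_lt_succ (fun n => hlt (a n)), fun n => u (a n),
    fun n => hu (a n), ?_⟩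
  intro x _ n hemp
  have han : a (n + 1) = m (a n) := rfl
  apply hprop (a n) x
  intro i hi1 hi2
  by_contra h
  have hxt : x i = true := by revert h; cases (x i) <;> simp
  have : i ∈ toSet x ∩ Set.Ico (a n) (a (n + 1)) := ⟨hxt, hi1, han ▸ hi2⟩
  rw [hemp] at this
  exact this
end

section
/- If a topological space X satisfies the property (Ω_ctbl → Γ) (every countable ω-cover of X contains a γ-subcover), then the disjoint union X ⊔ X also satisfies (Ω_ctbl → Γ). -/
open Set Filter

theorem stmt3 (X : Type*) [t : TopologicalSpace X]
    (h : CtblOG t (Set.univ : Set X)) :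
    CtblOG (inferInstance : TopologicalSpace (X ⊕ X)) Set.univ := by
  intro U hUc hU
  set f : Set (X ⊕ X) → Set X := fun u => Sum.inl ⁻¹' u ∩ Sum.inr ⁻¹' u with hf
  have hW : IsOmegaCoverT t (Set.univ : Set X) (f '' U) := by
    constructor
    · rintro w ⟨u, hu, rfl⟩
      have : IsOpen u := (hU.1 u hu).1
      rw [isOpen_sum_iff] at this
      refine ⟨(this.1.inter this.2 : IsOpen (f u)), ?_⟩
      intro heq
      obtain ⟨p, hp⟩ : ∃ p, p ∉ u := by
        by_contra hcon
        push_neg at hcon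
        exact (hU.1 u hu).2 (Set.eq_univ_of_forall hcon)
      cases p with
      | inl x =>
        have : x ∈ f u := heq ▸ Set.mem_univ x
        exact hp this.1
      | inr x =>
        have : x ∈ f u := heq ▸ Set.mem_univ x
        exact hp this.2
    · intro F hF _
      obtain ⟨u, hu, hsub⟩ := hU.2 (Sum.inl '' F ∪ Sum.inr '' F)
        ((hF.image _).union (hF.image _)) (Set.subset_univ _)
      refine ⟨f u, ⟨u, hu, rfl⟩, fun x hx => ?_⟩
      exact ⟨hsub (Or.inl ⟨x, hx, rfl⟩), hsub (Or.inr ⟨x, hx, rfl⟩)⟩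
  obtain ⟨V', hV'sub, hV'inf, hV'po, hV'g⟩ := h (f '' U) (hUc.image f) hW
  have hchoice : ∀ w ∈ V', ∃ u, u ∈ U ∧ f u = w := fun w hw => hV'sub hw
  choose g hgU hgf using hchoice
  classical
  set V : Set (Set (X ⊕ X)) := {u | ∃ w, ∃ hw : w ∈ V', u = g w hw} with hV
  have hVU : V ⊆ U := by rintro u ⟨w, hw, rfl⟩; exact hgU w hw
  refine ⟨V, hVU, ?_, fun u hu => hU.1 u (hVU hu), ?_⟩
  · -- V infinite: f maps V onto V'
    have hsurj : V' ⊆ f '' V := by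
      intro w hw
      exact ⟨g w hw, ⟨w, hw, rfl⟩, hgf w hw⟩
    intro hfin
    exact hV'inf (Set.Finite.subset (hfin.image f) hsurj)
  · rintro p -
    cases p with
    | inl x =>
      have : {u ∈ V | Sum.inl x ∉ u} ⊆ (fun w : {w // w ∈ V'} => g w.1 w.2) ''
          ((↑) ⁻¹' {w ∈ V' | x ∉ w} : Set {w // w ∈ V'}) := by
        rintro u ⟨⟨w, hw, rfl⟩, hnx⟩
        refine ⟨⟨w, hw⟩, ⟨hw, fun hxw => ?_⟩, rfl⟩
        have : x ∈ f (g w hw) := (hgf w hw).symm ▸ hxw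
        exact hnx this.1
      refine Set.Finite.subset (Set.Finite.image _ ?_) this
      exact ((hV'g x (Set.mem_univ x)).preimage (Subtype.coe_injective.injOn))
    | inr x =>
      have : {u ∈ V | Sum.inr x ∉ u} ⊆ (fun w : {w // w ∈ V'} => g w.1 w.2) ''
          ((↑) ⁻¹' {w ∈ V' | x ∉ w} : Set {w // w ∈ V'}) := by
        rintro u ⟨⟨w, hw, rfl⟩, hnx⟩
        refine ⟨⟨w, hw⟩, ⟨hw, fun hxw => ?_⟩, rfl⟩
        have : x ∈ f (g w hw) := (hgf w hw).symm ▸ hxw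
        exact hnx this.2
      refine Set.Finite.subset (Set.Finite.image _ ?_) this
      exact ((hV'g x (Set.mem_univ x)).preimage (Subtype.coe_injective.injOn))
end

section
/- A topological space X satisfies (Ω_ctbl → Γ) if and only if X satisfies S₁(Ω_ctbl, Γ): for every sequence 𝒰₁, 𝒰₂, … of countable ω-covers of X there exist sets U₁ ∈ 𝒰₁, U₂ ∈ 𝒰₂, … such that {Uₙ : n ∈ ℕ} is a γ-cover of X. -/
open Set Filter

/-- Iterated pairwise-intersection covers. -/
def interCov {X : Type*} (U : ℕ → Set (Set X)) : ℕ → Set (Set X)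
  | 0 => U 0
  | (n+1) => Set.image2 (· ∩ ·) (interCov U n) (U (n+1))

lemma interCov_countable {X : Type*} {U : ℕ → Set (Set X)}
    (hc : ∀ n, (U n).Countable) : ∀ n, (interCov U n).Countable
  | 0 => hc 0
  | (n+1) => Set.Countable.image2 (interCov_countable hc n) (hc (n+1)) _

lemma interCov_open_proper {X : Type*} [t : TopologicalSpace X] {U : ℕ → Set (Set X)}
    (hop : ∀ n, ∀ u ∈ U n, IsOpen u ∧ u ≠ Set.univ) :
    ∀ n, ∀ s ∈ interCov U n, IsOpen s ∧ s ≠ Set.univ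
  | 0 => hop 0
  | (n+1) => by
    rintro s ⟨a, ha, u, hu, rfl⟩
    obtain ⟨hao, hap⟩ := interCov_open_proper hop n a ha
    refine ⟨hao.inter (hop (n+1) u hu).1, fun h => hap ?_⟩
    exact Set.eq_univ_of_univ_subset (h ▸ Set.inter_subset_left)

lemma interCov_omega {X : Type*} [t : TopologicalSpace X] {U : ℕ → Set (Set X)}
    (hω : ∀ n, IsOmegaCoverT t Set.univ (U n)) :
    ∀ n, ∀ F : Set X, F.Finite → ∃ s ∈ interCov U n, F ⊆ s
  | 0 => fun F hF => (hω 0).2 F hF (Set.subset_univ F)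
  | (n+1) => by
    intro F hF
    obtain ⟨a, ha, hFa⟩ := interCov_omega hω n F hF
    obtain ⟨u, hu, hFu⟩ := (hω (n+1)).2 F hF (Set.subset_univ F)
    exact ⟨a ∩ u, ⟨a, ha, u, hu, rfl⟩, Set.subset_inter hFa hFu⟩

lemma interCov_extract {X : Type*} {U : ℕ → Set (Set X)} :
    ∀ n, ∀ s ∈ interCov U n, ∀ i ≤ n, ∃ u ∈ U i, s ⊆ u
  | 0 => by
    intro s hs i hi
    interval_cases i
    exact ⟨s, hs, subset_rfl⟩
  | (n+1) => by
    rintro s ⟨a, ha, u, hu, rfl⟩ i hi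
    rcases Nat.lt_or_ge i (n+1) with h | h
    · obtain ⟨v, hv, hav⟩ := interCov_extract n a ha i (Nat.lt_succ_iff.mp h)
      exact ⟨v, hv, Set.inter_subset_left.trans hav⟩
    · have : i = n + 1 := le_antisymm hi h
      subst this
      exact ⟨u, hu, Set.inter_subset_right⟩

/-- In a γ-cover, only finitely many members are contained in a fixed proper set. -/
lemma gamma_proper {X : Type*} {W : Set (Set X)}
    (hγ : ∀ x ∈ (Set.univ : Set X), {w ∈ W | x ∉ w}.Finite)
    {u : Set X} (hu : u ≠ Set.univ) : {w ∈ W | w ⊆ u}.Finite := by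
  obtain ⟨x, hx⟩ := (Set.ne_univ_iff_exists_notMem u).1 hu
  exact (hγ x trivial).subset (fun w ⟨hwW, hwu⟩ => ⟨hwW, fun hxw => hx (hwu hxw)⟩)

theorem stmt6 (X : Type*) [t : TopologicalSpace X] :
    CtblOG t (Set.univ : Set X) ↔
      ∀ U : ℕ → Set (Set X),
        (∀ n, (U n).Countable ∧ IsOmegaCoverT t Set.univ (U n)) →
        ∃ V : ℕ → Set X, (∀ n, V n ∈ U n) ∧
          IsGammaCoverT t Set.univ (Set.range V) := by
  constructor
  · intro h U hU
    -- Step 1: a γ-cover `G` extracted from `U 0`, with an injective enumeration `g`.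
    obtain ⟨G, hGsub, hGinf, hGop, hGγ⟩ := h (U 0) (hU 0).1 (hU 0).2
    haveI : Countable ↥G := ((hU 0).1.mono hGsub).to_subtype
    haveI : Infinite ↥G := hGinf.to_subtype
    obtain ⟨e⟩ : Nonempty (ℕ ≃ ↥G) := nonempty_equiv_of_countable
    set g : ℕ → Set X := fun n => ((e n : ↥G) : Set X) with hgdef
    have hgG : ∀ n, g n ∈ G := fun n => (e n).2
    have hginj : Function.Injective g := by
      intro m n hmn
      exact e.injective (Subtype.ext hmn)
    have hgfin : ∀ x : X, {n | x ∉ g n}.Finite := by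
      intro x
      have hsub : {n | x ∉ g n} ⊆ g ⁻¹' {w ∈ G | x ∉ w} := fun n hn => ⟨hgG n, hn⟩
      exact ((hGγ x trivial).preimage hginj.injOn).subset hsub
    -- Step 2: the big ω-cover V0 = ⋃ n, { a ∩ g n : a ∈ interCov U n }.
    set V0 : Set (Set X) := ⋃ n, (fun a => a ∩ g n) '' interCov U n with hV0def
    have hmemV0 : ∀ s, s ∈ V0 ↔ ∃ n, ∃ a ∈ interCov U n, a ∩ g n = s := by
      intro s
      simp [hV0def, Set.mem_iUnion, Set.mem_image]
    have hop : ∀ n, ∀ u ∈ U n, IsOpen u ∧ u ≠ Set.univ := fun n => (hU n).2.1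
    have hV0c : V0.Countable :=
      Set.countable_iUnion fun n => ((interCov_countable (fun n => (hU n).1) n).image _)
    have hV0ω : IsOmegaCoverT t Set.univ V0 := by
      constructor
      · intro u hu
        obtain ⟨n, a, ha, rfl⟩ := (hmemV0 u).1 hu
        obtain ⟨hao, hap⟩ := interCov_open_proper hop n a ha
        refine ⟨hao.inter (hGop _ (hgG n)).1, fun hEq => hap ?_⟩
        exact Set.eq_univ_of_univ_subset (hEq ▸ Set.inter_subset_left)
      · intro F hF _
        have hbad : {n | ¬ F ⊆ g n}.Finite := by
          apply Set.Finite.subset (hF.biUnion (fun x _ => hgfin x))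
          intro n hn
          obtain ⟨x, hxF, hxg⟩ := Set.not_subset.mp hn
          exact Set.mem_biUnion hxF hxg
        obtain ⟨n, hn⟩ := hbad.infinite_compl.nonempty
        obtain ⟨a, ha, hFa⟩ := interCov_omega (fun n => (hU n).2) n F hF
        refine ⟨a ∩ g n, (hmemV0 _).2 ⟨n, a, ha, rfl⟩, Set.subset_inter hFa ?_⟩
        simpa using hn
    -- Step 3: γ-subcover `W` of `V0`.
    obtain ⟨W, hWsub, hWinf, hWop, hWγ⟩ := h V0 hV0c hV0ω
    have hrep : ∀ w ∈ W, ∃ k a, a ∈ interCov U k ∧ w = a ∩ g k := by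
      intro w hw
      obtain ⟨k, a, ha, hrepr⟩ := (hmemV0 w).1 (hWsub hw)
      exact ⟨k, a, ha, hrepr.symm⟩
    choose! m a hai hrepr using hrep
    -- fibers of `m` on `W` are finite
    have hfib : ∀ k, {w ∈ W | m w = k}.Finite := by
      intro k
      apply (gamma_proper hWγ (hGop _ (hgG k)).2).subset
      rintro w ⟨hwW, hk⟩
      refine ⟨hwW, ?_⟩
      have hw' := hrepr w hwW
      rw [hk] at hw'
      rw [hw']
      exact Set.inter_subset_right
    -- `m` is unbounded on `W`
    have hub : ∀ i, ∃ w ∈ W, i ≤ m w := by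
      intro i
      by_contra hcon
      push_neg at hcon
      apply hWinf
      apply Set.Finite.subset ((Set.finite_Iio i).biUnion (fun k _ => hfib k))
      intro w hw
      exact Set.mem_biUnion (hcon w hw) ⟨hw, rfl⟩
    choose w0 hw0W hw0m using hub
    -- the selection
    have hrec : ∀ i, ∃ u ∈ U i, a (w0 i) ⊆ u := fun i =>
      interCov_extract (m (w0 i)) (a (w0 i)) (hai (w0 i) (hw0W i)) i (hw0m i)
    choose Vf hVfU hVfsub using hrec
    have hwV : ∀ i, w0 i ⊆ Vf i := by
      intro i
      rw [hrepr (w0 i) (hw0W i)]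
      exact Set.inter_subset_left.trans (hVfsub i)
    refine ⟨Vf, hVfU, ?_, ?_, ?_⟩
    · -- range infinite
      by_contra hfin
      rw [Set.not_infinite] at hfin
      have hex : ∃ u ∈ Set.range Vf, {i | Vf i = u}.Infinite := by
        by_contra hcon
        push_neg at hcon
        have huniv : (Set.univ : Set ℕ).Finite := by
          apply Set.Finite.subset (hfin.biUnion hcon)
          intro i _
          exact Set.mem_biUnion (Set.mem_range_self i) rfl
        exact Set.infinite_univ huniv
      obtain ⟨u, huR, hufib⟩ := hex
      obtain ⟨i0, hi0⟩ := huR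
      have hupr : u ≠ Set.univ := by
        have := (hU i0).2.1 (Vf i0) (hVfU i0)
        rw [hi0] at this
        exact this.2
      have hS : {w ∈ W | w ⊆ u}.Finite := gamma_proper hWγ hupr
      obtain ⟨M, hM⟩ := (hS.image m).bddAbove
      obtain ⟨i, hiu, hMi⟩ := hufib.exists_gt M
      have hin : w0 i ∈ {w ∈ W | w ⊆ u} := ⟨hw0W i, by rw [← hiu]; exact hwV i⟩
      have : m (w0 i) ≤ M := hM (Set.mem_image_of_mem m hin)
      have := hw0m i
      omega
    · rintro u ⟨i, rfl⟩
      exact (hU i).2.1 _ (hVfU i)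
    · intro x _
      have hB : {w ∈ W | x ∉ w}.Finite := hWγ x trivial
      have hidx : {i | x ∉ Vf i}.Finite := by
        apply Set.Finite.subset (hB.biUnion (fun b _ => Set.finite_Iic (m b)))
        intro i hi
        have hw0B : w0 i ∈ {w ∈ W | x ∉ w} := ⟨hw0W i, fun hxw => hi (hwV i hxw)⟩
        exact Set.mem_biUnion hw0B (hw0m i)
      apply (hidx.image Vf).subset
      rintro u ⟨⟨i, rfl⟩, hxu⟩
      exact ⟨i, hxu, rfl⟩
  · intro h U hUc hUω
    obtain ⟨V, hV, hγ⟩ := h (fun _ => U) (fun _ => ⟨hUc, hUω⟩)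
    exact ⟨Set.range V, Set.range_subset_iff.2 hV, hγ⟩
end

section
/- Let (a_k)_{k∈ℕ} be a sequence of strictly increasing functions a_k : ℕ → ℕ. Then there exists a strictly increasing function a : ℕ → ℕ such that for each k, for all but finitely many n, the interval [a(n), a(n+1)) contains at least two values of a_k, i.e., |range(a_k) ∩ [a(n), a(n+1))| ≥ 2. -/
open Set Filter

/-- Auxiliary sequence for `stmt9`. -/
def stmt9Aux (a : ℕ → ℕ → ℕ) : ℕ → ℕ
  | 0 => 0
  | n + 1 => (Finset.range (n + 1)).sup (fun k => a k (stmt9Aux a n + 1)) + 1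

theorem stmt9 (a : ℕ → ℕ → ℕ) (ha : ∀ k, StrictMono (a k)) :
    ∃ A : ℕ → ℕ, StrictMono A ∧ ∀ k, ∀ᶠ n in Filter.atTop,
      2 ≤ (Set.range (a k) ∩ Set.Ico (A n) (A (n + 1))).ncard := by
  set A := stmt9Aux a with hA
  have hsup : ∀ n k, k ≤ n → a k (A n + 1) < A (n + 1) := by
    intro n k hk
    have : a k (A n + 1) ≤ (Finset.range (n + 1)).sup (fun k => a k (A n + 1)) :=
      Finset.le_sup (f := fun k => a k (A n + 1)) (Finset.mem_range.mpr (Nat.lt_succ_of_le hk))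
    simpa [hA, stmt9Aux] using Nat.lt_succ_of_le this
  have hmono : StrictMono A := by
    apply strictMono_nat_of_lt_succ
    intro n
    have h0 := hsup n 0 (Nat.zero_le n)
    have : A n + 1 ≤ a 0 (A n + 1) := (ha 0).le_apply
    omega
  refine ⟨A, hmono, fun k => ?_⟩
  filter_upwards [Filter.eventually_ge_atTop k] with n hk
  -- find least m with A n ≤ a k m
  have hex : ∃ m, A n ≤ a k m := ⟨A n, (ha k).le_apply⟩
  set m := Nat.find hex with hm
  have hm1 : A n ≤ a k m := Nat.find_spec hex
  have hmle : m ≤ A n := Nat.find_le (ha k).le_apply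
  have hlt : a k (m + 1) < A (n + 1) := by
    have : a k (m + 1) ≤ a k (A n + 1) := (ha k).monotone (by omega)
    exact lt_of_le_of_lt this (hsup n k hk)
  have hne : a k m ≠ a k (m + 1) := ne_of_lt ((ha k) (Nat.lt_succ_self m))
  have hsub : {a k m, a k (m + 1)} ⊆
      Set.range (a k) ∩ Set.Ico (A n) (A (n + 1)) := by
    intro x hx
    rcases hx with h | h <;> subst h
    · exact ⟨⟨m, rfl⟩, hm1, lt_trans ((ha k) (Nat.lt_succ_self m)) hlt⟩
    · exact ⟨⟨m + 1, rfl⟩, le_trans hm1 ((ha k) (Nat.lt_succ_self m)).le, hlt⟩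
  have hfin : (Set.range (a k) ∩ Set.Ico (A n) (A (n + 1))).Finite :=
    (Set.finite_Ico _ _).subset Set.inter_subset_right
  calc 2 = ({a k m, a k (m + 1)} : Set ℕ).ncard := (Set.ncard_pair hne).symm
    _ ≤ _ := Set.ncard_le_ncard hsub hfin
end

section
/- Let a, a' : ℕ → ℕ be strictly increasing. Suppose that every interval [a(n), a(n+1)) with n large enough contains two consecutive values a'(i), a'(i+1). Then for any infinite b' ⊆ ℕ, the set of indices i with [a'(i), a'(i+1)) ⊆ ⋃_{n∈b'} [a(n), a(n+1)) is infinite. -/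
open Set Filter

theorem stmt10 (a a' : ℕ → ℕ) (ha : StrictMono a) (ha' : StrictMono a')
    (h : ∀ᶠ n in Filter.atTop, ∃ i, a' i ∈ Set.Ico (a n) (a (n + 1)) ∧
      a' (i + 1) ∈ Set.Ico (a n) (a (n + 1)))
    (b' : Set ℕ) (hb' : b'.Infinite) :
    {i : ℕ | Set.Ico (a' i) (a' (i + 1)) ⊆
      ⋃ n ∈ b', Set.Ico (a n) (a (n + 1))}.Infinite := by
  obtain ⟨n0, hn0⟩ := Filter.eventually_atTop.mp h
  apply Set.infinite_of_forall_exists_gt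
  intro N
  obtain ⟨n, hnb, hn⟩ := hb'.exists_gt (max n0 (a' N))
  obtain ⟨i, hi1, hi2⟩ := hn0 n (le_of_lt (lt_of_le_of_lt (le_max_left _ _) hn))
  refine ⟨i, ?_, ?_⟩
  · intro k hk
    refine Set.mem_biUnion hnb ⟨le_trans hi1.1 hk.1, lt_of_lt_of_le hk.2 hi2.2.le⟩
  · have h1 : a' N < n := lt_of_le_of_lt (le_max_right n0 (a' N)) hn
    have : a' N < a' i := lt_of_lt_of_le h1 (le_trans (ha.id_le n) hi1.1)
    exact ha'.lt_iff_lt.mp this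
end
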